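/- arXiv:2304.08601 — 3 statements merged into one kernel-verified Lean document; each statement's English description precedes it below -/
import Mathlib

section
/- For any C > 0, the number of rank-2 subgroups Λ of ℤ^d whose fundamental domain has 2-dimensional area (covolume) at most C is finite. -/
/-- The Euclidean covolume (area of the fundamental parallelogram) of the
rank-2 lattice spanned by two integer vectors `a`, `b` in `ℤ^d`. -/
noncomputable def covol2 {d : ℕ} (a b : Fin d → ℤ) : ℝ :=
  Real.sqrt ((∑ i, (a i : ℝ) ^ 2) * (∑ i, (b i : ℝ) ^ 2) -
    (∑ i, (a i : ℝ) * (b i : ℝ)) ^ 2)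

namespace Covol2Aux

variable {d : ℕ}

/-- squared norm -/
def A (a : Fin d → ℤ) : ℤ := ∑ i, a i ^ 2

/-- inner product -/
def P (a b : Fin d → ℤ) : ℤ := ∑ i, a i * b i

lemma A_nonneg (a : Fin d → ℤ) : 0 ≤ A a :=
  Finset.sum_nonneg fun _ _ => sq_nonneg _

lemma P_comm (a b : Fin d → ℤ) : P a b = P b a := by
  unfold P; exact Finset.sum_congr rfl fun i _ => mul_comm _ _

lemma covol2_eq (a b : Fin d → ℤ) :
    covol2 a b = Real.sqrt ((A a * A b - (P a b) ^ 2 : ℤ)) := by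
  unfold covol2 A P
  push_cast
  ring_nf

lemma A_sub_smul (a b : Fin d → ℤ) (k : ℤ) :
    A (b - k • a) = A b - 2 * k * P a b + k ^ 2 * A a := by
  unfold A P
  rw [show ∑ i, (b - k • a) i ^ 2
      = ∑ i, (b i ^ 2 - 2 * k * (a i * b i) + k ^ 2 * a i ^ 2) from
    Finset.sum_congr rfl fun i _ => by simp [Pi.sub_apply, Pi.smul_apply, smul_eq_mul]; ring]
  rw [Finset.sum_add_distrib, Finset.sum_sub_distrib, ← Finset.mul_sum, ← Finset.mul_sum]

lemma P_sub_smul (a b : Fin d → ℤ) (k : ℤ) :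
    P a (b - k • a) = P a b - k * A a := by
  unfold A P
  rw [show ∑ i, a i * (b - k • a) i
      = ∑ i, (a i * b i - k * a i ^ 2) from
    Finset.sum_congr rfl fun i _ => by simp [Pi.sub_apply, Pi.smul_apply, smul_eq_mul]; ring]
  rw [Finset.sum_sub_distrib, ← Finset.mul_sum]

lemma li_swap {a b : Fin d → ℤ} (h : LinearIndependent ℤ ![a, b]) :
    LinearIndependent ℤ ![b, a] := by
  rw [LinearIndependent.pair_iff] at h ⊢
  intro s t hst
  obtain ⟨h1, h2⟩ := h t s (by rw [add_comm]; exact hst)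
  exact ⟨h2, h1⟩

lemma li_shear {a b : Fin d → ℤ} (k : ℤ) (h : LinearIndependent ℤ ![a, b]) :
    LinearIndependent ℤ ![a, b - k • a] := by
  rw [LinearIndependent.pair_iff] at h ⊢
  intro s t hst
  have hst' : (s - t * k) • a + t • b = 0 := by
    rw [← hst]; module
  obtain ⟨h1, h2⟩ := h _ _ hst'
  refine ⟨?_, h2⟩
  rw [h2] at h1
  simpa using h1

lemma span_shear (a b : Fin d → ℤ) (k : ℤ) :
    Submodule.span ℤ {a, b - k • a} = Submodule.span ℤ {a, b} := by
  apply Submodule.span_eq_span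
  · rw [Set.insert_subset_iff, Set.singleton_subset_iff]
    refine ⟨Submodule.subset_span (by simp), ?_⟩
    exact Submodule.sub_mem _ (Submodule.subset_span (by simp))
      (Submodule.smul_mem _ _ (Submodule.subset_span (by simp)))
  · rw [Set.insert_subset_iff, Set.singleton_subset_iff]
    refine ⟨Submodule.subset_span (by simp), ?_⟩
    have hb : b = (b - k • a) + k • a := by abel
    rw [hb]
    exact Submodule.add_mem _ (Submodule.subset_span (by simp))
      (Submodule.smul_mem _ _ (Submodule.subset_span (by simp)))

lemma one_le_A {a : Fin d → ℤ} (h : a ≠ 0) : 1 ≤ A a := by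
  obtain ⟨i, hi⟩ := Function.ne_iff.mp h
  have h1 : 1 ≤ |a i| := Int.one_le_abs (by simpa using hi)
  have h2 : 1 ≤ a i ^ 2 := by nlinarith [sq_abs (a i)]
  calc (1 : ℤ) ≤ a i ^ 2 := h2
    _ ≤ A a := Finset.single_le_sum (fun j _ => sq_nonneg (a j)) (Finset.mem_univ i)

lemma exists_k {a : Fin d → ℤ} (hA : 1 ≤ A a) (p : ℤ) :
    ∃ k : ℤ, 4 * (p - k * A a) ^ 2 ≤ (A a) ^ 2 := by
  set q : ℚ := (p : ℚ) / (A a : ℚ) with hq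
  refine ⟨round q, ?_⟩
  have hA0 : (0 : ℚ) < (A a : ℚ) := by exact_mod_cast lt_of_lt_of_le one_pos hA
  have hr : |q - (round q : ℚ)| ≤ 1 / 2 := abs_sub_round q
  have hpq : (p : ℚ) = q * (A a : ℚ) := by
    rw [hq]; field_simp
  have key : 4 * ((p : ℚ) - (round q : ℚ) * (A a : ℚ)) ^ 2 ≤ ((A a : ℚ)) ^ 2 := by
    rw [hpq]
    have h2 : (q - (round q : ℚ)) ^ 2 ≤ (1 / 2) ^ 2 := by
      nlinarith [abs_nonneg (q - (round q : ℚ)), sq_abs (q - (round q : ℚ))]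
    have : q * (A a : ℚ) - (round q : ℚ) * (A a : ℚ)
        = (q - (round q : ℚ)) * (A a : ℚ) := by ring
    rw [this]
    nlinarith [sq_nonneg ((A a : ℚ))]
  exact_mod_cast key

lemma abs_le_sq (x : ℤ) : |x| ≤ x ^ 2 := by
  rcases eq_or_ne x 0 with h | h
  · simp [h]
  · have h1 : 1 ≤ |x| := Int.one_le_abs h
    nlinarith [sq_abs x, abs_nonneg x]

lemma reduce : ∀ n : ℕ, ∀ a b : Fin d → ℤ, (A a).toNat ≤ n →
    LinearIndependent ℤ ![a, b] → A a ≤ A b →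
    ∃ a' b', LinearIndependent ℤ ![a', b'] ∧
      Submodule.span ℤ {a', b'} = Submodule.span ℤ {a, b} ∧
      A a' * A b' - (P a' b') ^ 2 = A a * A b - (P a b) ^ 2 ∧
      A a' ≤ A b' ∧ 4 * (P a' b') ^ 2 ≤ (A a') ^ 2 := by
  intro n
  induction n using Nat.strong_induction_on with
  | _ n IH =>
    intro a b hn hli hab
    have ha0 : a ≠ 0 := by simpa using hli.ne_zero 0
    have hA1 : 1 ≤ A a := one_le_A ha0
    obtain ⟨k, hk⟩ := exists_k hA1 (P a b)
    set b' := b - k • a with hb'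
    have hli' : LinearIndependent ℤ ![a, b'] := li_shear k hli
    have hspan' : Submodule.span ℤ {a, b'} = Submodule.span ℤ {a, b} := span_shear a b k
    have hP' : P a b' = P a b - k * A a := P_sub_smul a b k
    have hA' : A b' = A b - 2 * k * P a b + k ^ 2 * A a := A_sub_smul a b k
    have hdet : A a * A b' - (P a b') ^ 2 = A a * A b - (P a b) ^ 2 := by
      rw [hP', hA']; ring
    by_cases hle : A a ≤ A b'
    · exact ⟨a, b', hli', hspan', hdet, hle, by rw [hP']; exact hk⟩
    · push_neg at hle
      have hb'0 : b' ≠ 0 := by simpa using hli'.ne_zero 1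
      have hB1 : 1 ≤ A b' := one_le_A hb'0
      have hm : (A b').toNat < n := by omega
      obtain ⟨a', b'', h1, h2, h3, h4, h5⟩ :=
        IH _ hm b' a le_rfl (li_swap hli') (le_of_lt hle)
      refine ⟨a', b'', h1, ?_, ?_, h4, h5⟩
      · rw [h2, Set.pair_comm b' a, hspan']
      · rw [h3, P_comm b' a, hP', hA']; ring

lemma reduce' (a b : Fin d → ℤ) (hli : LinearIndependent ℤ ![a, b]) :
    ∃ a' b', LinearIndependent ℤ ![a', b'] ∧
      Submodule.span ℤ {a', b'} = Submodule.span ℤ {a, b} ∧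
      A a' * A b' - (P a' b') ^ 2 = A a * A b - (P a b) ^ 2 ∧
      1 ≤ A a' ∧ A a' ≤ A b' ∧ 4 * (P a' b') ^ 2 ≤ (A a') ^ 2 := by
  by_cases hab : A a ≤ A b
  · obtain ⟨a', b', h1, h2, h3, h4, h5⟩ := reduce (A a).toNat a b le_rfl hli hab
    have ha0 : a' ≠ 0 := by simpa using h1.ne_zero 0
    exact ⟨a', b', h1, h2, h3, one_le_A ha0, h4, h5⟩
  · push_neg at hab
    obtain ⟨a', b', h1, h2, h3, h4, h5⟩ :=
      reduce (A b).toNat b a le_rfl (li_swap hli) (le_of_lt hab)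
    have ha0 : a' ≠ 0 := by simpa using h1.ne_zero 0
    refine ⟨a', b', h1, ?_, ?_, one_le_A ha0, h4, h5⟩
    · rw [h2, Set.pair_comm b a]
    · rw [h3, P_comm b a]; ring

end Covol2Aux

open Covol2Aux in
/-- for any `C > 0` there are only finitely many rank-2 subgroups
of `ℤ^d` of covolume at most `C`. -/
theorem finite_rank_two_sublattices_of_covol_le {d : ℕ} (C : ℝ) (hC : 0 < C) :
    {Λ : Submodule ℤ (Fin d → ℤ) | ∃ a b : Fin d → ℤ,
      LinearIndependent ℤ ![a, b] ∧
      Λ = Submodule.span ℤ {a, b} ∧ covol2 a b ≤ C}.Finite := by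
  set M : ℤ := ⌈(2 * C ^ 2 : ℝ)⌉ with hM
  have hfin : ((Set.Icc (fun _ => -M) (fun _ => M) : Set (Fin d → ℤ)) ×ˢ
      (Set.Icc (fun _ => -M) (fun _ => M) : Set (Fin d → ℤ))).Finite :=
    Set.Finite.prod (Set.finite_Icc _ _) (Set.finite_Icc _ _)
  apply Set.Finite.subset (hfin.image (fun p => Submodule.span ℤ {p.1, p.2}))
  rintro Λ ⟨a, b, hli, hΛ, hcov⟩
  obtain ⟨a', b', h1, h2, h3, hA1, hAB, hred⟩ := reduce' a b hli
  -- covolume bound transfers to the reduced basis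
  have hcov' : ((A a' * A b' - (P a' b') ^ 2 : ℤ) : ℝ) ≤ C ^ 2 := by
    have he : covol2 a b = Real.sqrt ((A a' * A b' - (P a' b') ^ 2 : ℤ)) := by
      rw [covol2_eq, h3]
    rcases le_or_gt ((A a' * A b' - (P a' b') ^ 2 : ℤ) : ℝ) 0 with h | h
    · nlinarith
    · have hs := Real.sq_sqrt h.le
      have : Real.sqrt ((A a' * A b' - (P a' b') ^ 2 : ℤ)) ≤ C := by rw [← he]; exact hcov
      nlinarith [Real.sqrt_nonneg ((A a' * A b' - (P a' b') ^ 2 : ℤ) : ℝ)]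
  have hB1 : 1 ≤ A b' := le_trans hA1 hAB
  -- 4 P'^2 ≤ A'^2 ≤ A' B', so 3 A' B' ≤ 4 (A'B' - P'^2) ≤ 4 C^2
  have hP2 : 4 * (P a' b') ^ 2 ≤ A a' * A b' := by nlinarith
  have h3AB : (3 * (A a' * A b') : ℝ) ≤ 4 * C ^ 2 := by
    have : (3 * (A a' * A b') : ℤ) ≤ 4 * (A a' * A b' - (P a' b') ^ 2) := by nlinarith
    have h4 : ((3 * (A a' * A b') : ℤ) : ℝ) ≤ ((4 * (A a' * A b' - (P a' b') ^ 2) : ℤ) : ℝ) := by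
      exact_mod_cast this
    have h5 := hcov'
    push_cast at h4 h5 ⊢
    nlinarith
  have hAle : (A a' : ℝ) ≤ 2 * C ^ 2 := by
    have h5 : (A a' : ℝ) ≤ (A a' : ℝ) * (A b' : ℝ) := by
      have : (1 : ℝ) ≤ (A b' : ℝ) := by exact_mod_cast hB1
      nlinarith [show (1 : ℝ) ≤ (A a' : ℝ) from by exact_mod_cast hA1]
    push_cast at h3AB
    nlinarith
  have hBle : (A b' : ℝ) ≤ 2 * C ^ 2 := by
    have h5 : (A b' : ℝ) ≤ (A a' : ℝ) * (A b' : ℝ) := by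
      have h6 : (1 : ℝ) ≤ (A a' : ℝ) := by exact_mod_cast hA1
      nlinarith [show (1 : ℝ) ≤ (A b' : ℝ) from by exact_mod_cast hB1]
    push_cast at h3AB
    nlinarith
  have hMR : (2 * C ^ 2 : ℝ) ≤ (M : ℝ) := by rw [hM]; exact Int.le_ceil _
  have hAM : A a' ≤ M := by exact_mod_cast le_trans hAle hMR
  have hBM : A b' ≤ M := by exact_mod_cast le_trans hBle hMR
  have hbound : ∀ (c : Fin d → ℤ), A c ≤ M → ∀ i, -M ≤ c i ∧ c i ≤ M := by
    intro c hc i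
    have h7 : c i ^ 2 ≤ A c :=
      Finset.single_le_sum (fun j _ => sq_nonneg (c j)) (Finset.mem_univ i)
    have h8 : |c i| ≤ M := le_trans (abs_le_sq (c i)) (le_trans h7 hc)
    exact abs_le.mp h8
  refine ⟨(a', b'), ?_, ?_⟩
  · refine Set.mem_prod.mpr ⟨Set.mem_Icc.mpr ⟨?_, ?_⟩, Set.mem_Icc.mpr ⟨?_, ?_⟩⟩
    · exact fun i => (hbound a' hAM i).1
    · exact fun i => (hbound a' hAM i).2
    · exact fun i => (hbound b' hBM i).1
    · exact fun i => (hbound b' hBM i).2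
  · simp only [hΛ]
    exact h2
end

section
/- Suppose (z_ν) is a sequence of nonzero integer points in ℝ^d such that dist(z_ν, ℓ) → 0 for a fixed line ℓ through the origin with ℓ ∩ span(z_ν, z_{ν+1}) = {0} for all ν, and z_ν, z_{ν+1} are linearly independent. Then the covolume Δ_ν of the rank-2 lattice generated by z_ν and z_{ν+1} tends to infinity as ν → ∞. -/
/-!
Suppose `Δ_ν < B` for infinitely many `ν`. The Plücker coordinates `a_i b_j - a_j b_i` of
`(z_ν, z_{ν+1})` are integers whose squares sum to `2 Δ_ν²` (Lagrange's identity), so along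
those `ν` they take finitely many values and one value recurs infinitely often. Plücker
coordinates determine the plane they come from, hence infinitely many `z_ν` lie in one fixed
plane `W` with `W ∩ ℓ = 0`. On `W` the distance to `ℓ` is at least `c ‖x‖` for some `c > 0`
(an injective linear map on a finite-dimensional space is bounded below), while `‖z_ν‖ ≥ 1`;
this contradicts `dist(z_ν, ℓ) → 0`.
-/

open Filter

/-- Embedding of integer points into Euclidean space. -/
noncomputable def intEmb {d : ℕ} (v : Fin d → ℤ) : EuclideanSpace ℝ (Fin d) :=
  WithLp.toLp 2 (fun i => (v i : ℝ))

open Metric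

theorem sum_sum_mul_sub_mul_sq {ι R : Type*} [Fintype ι] [CommRing R] (x y : ι → R) :
    ∑ i, ∑ j, (x i * y j - x j * y i) ^ 2 =
      2 * ((∑ i, x i ^ 2) * (∑ i, y i ^ 2) - (∑ i, x i * y i) ^ 2) := by
  have expand : ∀ i j, (x i * y j - x j * y i) ^ 2 =
      x i ^ 2 * y j ^ 2 + y i ^ 2 * x j ^ 2 - 2 * (x i * y i * (x j * y j)) := fun i j => by ring
  simp only [expand, Finset.sum_add_distrib, Finset.sum_sub_distrib, ← Finset.mul_sum,
    ← Finset.sum_mul, sq (∑ i, x i * y i)]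
  ring

theorem exists_pos_mul_norm_le_infDist {E : Type*} [NormedAddCommGroup E] [NormedSpace ℝ E]
    {W L : Submodule ℝ E} [FiniteDimensional ℝ W] (hL : IsClosed (L : Set E))
    (h : Disjoint W L) : ∃ c > 0, ∀ x ∈ W, c * ‖x‖ ≤ infDist x L := by
  have hker : LinearMap.ker (L.mkQ ∘ₗ W.subtype) = ⊥ := by
    rwa [LinearMap.ker_comp, Submodule.ker_mkQ, ← Submodule.disjoint_iff_comap_eq_bot]
  obtain ⟨K, hK, hf⟩ := (L.mkQ ∘ₗ W.subtype).exists_antilipschitzWith hker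
  refine ⟨K⁻¹, by positivity, fun x hx => ?_⟩
  have hnorm : ‖L.mkQ x‖ = infDist x L := QuotientAddGroup.norm_mk (S := L.toAddSubgroup) x
  calc (K : ℝ)⁻¹ * ‖x‖ ≤ (K : ℝ)⁻¹ * (K * ‖L.mkQ x‖) := by
        gcongr
        simpa using hf.le_mul_dist ⟨x, hx⟩ 0
    _ = infDist x L := by rw [inv_mul_cancel_left₀ (by positivity), hnorm]

def plucker {d : ℕ} (a b : Fin d → ℤ) (i j : Fin d) : ℤ := a i * b j - a j * b i

section plucker

variable {d : ℕ} (a b : Fin d → ℤ)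

theorem sum_sum_plucker_sq : ∑ i, ∑ j, (plucker a b i j : ℝ) ^ 2 = 2 * covol2 a b ^ 2 := by
  have lagrange := sum_sum_mul_sub_mul_sq (fun i => (a i : ℝ)) (fun i => (b i : ℝ))
  have gram_nonneg : 0 ≤ (∑ i, (a i : ℝ) ^ 2) * (∑ i, (b i : ℝ) ^ 2) -
      (∑ i, (a i : ℝ) * (b i : ℝ)) ^ 2 := by
    have : 0 ≤ ∑ i, ∑ j, ((a i : ℝ) * b j - a j * b i) ^ 2 := by positivity
    linarith
  rw [covol2, Real.sq_sqrt gram_nonneg, ← lagrange]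
  push_cast [plucker]
  rfl

theorem plucker_sq_le_two_mul_covol2_sq (i j : Fin d) :
    (plucker a b i j : ℝ) ^ 2 ≤ 2 * covol2 a b ^ 2 := by
  rw [← sum_sum_plucker_sq]
  calc (plucker a b i j : ℝ) ^ 2 ≤ ∑ j', (plucker a b i j' : ℝ) ^ 2 :=
        Finset.single_le_sum (f := fun j' => (plucker a b i j' : ℝ) ^ 2)
          (fun _ _ => sq_nonneg _) (Finset.mem_univ j)
    _ ≤ ∑ i', ∑ j', (plucker a b i' j' : ℝ) ^ 2 :=
        Finset.single_le_sum (f := fun i' => ∑ j', (plucker a b i' j' : ℝ) ^ 2)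
          (fun _ _ => by positivity) (Finset.mem_univ i)

theorem abs_plucker_le_of_covol2_lt {B : ℝ} (h : covol2 a b < B) (i j : Fin d) :
    |plucker a b i j| ≤ ⌈2 * B ^ 2⌉ := by
  have hp : (|plucker a b i j| : ℝ) ≤ (plucker a b i j : ℝ) ^ 2 := by
    exact_mod_cast Int.natAbs_le_self_sq (plucker a b i j)
  have hB : covol2 a b ^ 2 < B ^ 2 := pow_lt_pow_left₀ h (Real.sqrt_nonneg _) two_ne_zero
  have : (|plucker a b i j| : ℝ) ≤ ⌈2 * B ^ 2⌉ := by
    linarith [plucker_sq_le_two_mul_covol2_sq a b i j, Int.le_ceil (2 * B ^ 2)]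
  exact_mod_cast this

theorem finite_setOf_plucker_of_covol2_lt (B : ℝ) :
    {m | ∃ a b : Fin d → ℤ, covol2 a b < B ∧ plucker a b = m}.Finite := by
  refine (Set.Finite.pi fun _ => Set.Finite.pi fun _ =>
    Set.finite_Icc (-⌈2 * B ^ 2⌉) ⌈2 * B ^ 2⌉).subset ?_
  rintro _ ⟨a, b, h, rfl⟩
  simp only [Set.mem_pi, Set.mem_univ, Set.mem_Icc, forall_const]
  exact fun i j => abs_le.1 (abs_plucker_le_of_covol2_lt a b h i j)

theorem exists_plucker_ne_zero (h : LinearIndependent ℝ ![intEmb a, intEmb b]) :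
    ∃ i j, plucker a b i j ≠ 0 := by
  by_contra! hzero
  obtain ⟨i, hi⟩ : ∃ i, a i ≠ 0 := by
    by_contra! ha
    exact h.ne_zero 0 (by ext k; simp [intEmb, ha k])
  have hcomb : (-(b i : ℝ)) • intEmb a + (a i : ℝ) • intEmb b = 0 := by
    ext k
    have hk : ((plucker a b i k : ℤ) : ℝ) = 0 := by exact_mod_cast hzero i k
    push_cast [plucker] at hk
    simp only [PiLp.add_apply, PiLp.smul_apply, smul_eq_mul, intEmb, PiLp.zero_apply]
    linarith
  exact hi (by exact_mod_cast (LinearIndependent.pair_iff.1 h _ _ hcomb).2)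

theorem intEmb_mem_span_of_plucker_eq {a' b' : Fin d → ℤ} {i j : Fin d}
    (hij : plucker a b i j ≠ 0) (h : plucker a' b' = plucker a b) :
    intEmb a' ∈ Submodule.span ℝ {intEmb a, intEmb b} := by
  -- the Plücker relation `a'_i p_jk - a'_j p_ik + a'_k p_ij = 0` of `(a', b')`,
  -- with the coordinates `p` of `(a, b)` substituted, solved for `a'_k`
  have key : ∀ k, plucker a b i j * a' k =
      (a' i * b j - a' j * b i) * a k + (a i * a' j - a j * a' i) * b k := by
    intro k
    have hjk := congrFun (congrFun h j) k
    have hik := congrFun (congrFun h i) k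
    have hij' := congrFun (congrFun h i) j
    simp only [plucker] at hjk hik hij' ⊢
    linear_combination a' j * hik - a' i * hjk - a' k * hij'
  have hp : (plucker a b i j : ℝ) ≠ 0 := by exact_mod_cast hij
  refine Submodule.mem_span_pair.2 ⟨((a' i * b j - a' j * b i : ℤ) : ℝ) / plucker a b i j,
    ((a i * a' j - a j * a' i : ℤ) : ℝ) / plucker a b i j, ?_⟩
  ext k
  simp only [PiLp.add_apply, PiLp.smul_apply, smul_eq_mul, intEmb, PiLp.toLp_apply]
  field_simp
  exact_mod_cast (key k).symm

end plucker

theorem one_le_norm_intEmb {d : ℕ} {v : Fin d → ℤ} (hv : v ≠ 0) : 1 ≤ ‖intEmb v‖ := by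
  obtain ⟨i, hi⟩ := Function.ne_iff.1 hv
  calc (1 : ℝ) ≤ |(v i : ℝ)| := by exact_mod_cast Int.one_le_abs hi
    _ = ‖intEmb v i‖ := by simp [intEmb]
    _ ≤ ‖intEmb v‖ := PiLp.norm_apply_le _ i

theorem covol_tendsto_atTop_general {d : ℕ}
    (z : ℕ → (Fin d → ℤ)) (hz : ∀ ν, z ν ≠ 0)
    (ℓ : Submodule ℝ (EuclideanSpace ℝ (Fin d)))
    (hindep : ∀ ν, LinearIndependent ℝ ![intEmb (z ν), intEmb (z (ν + 1))])
    (havoid : ∀ ν, ℓ ⊓ Submodule.span ℝ {intEmb (z ν), intEmb (z (ν + 1))} = ⊥)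
    (hdist : Tendsto (fun ν => Metric.infDist (intEmb (z ν)) (ℓ : Set (EuclideanSpace ℝ (Fin d))))
      atTop (nhds 0)) :
    Tendsto (fun ν => covol2 (z ν) (z (ν + 1))) atTop atTop := by
  refine tendsto_atTop.2 fun B => ?_
  by_contra hB
  have hbounded : ∃ᶠ ν in atTop, ∃ m ∈ {m | ∃ a b, covol2 a b < B ∧ plucker a b = m},
      plucker (z ν) (z (ν + 1)) = m :=
    (not_eventually.1 hB).mono fun ν hν => ⟨_, ⟨_, _, not_le.1 hν, rfl⟩, rfl⟩
  obtain ⟨m, -, hm⟩ := (frequently_exists_finite (finite_setOf_plucker_of_covol2_lt B)).1 hbounded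
  obtain ⟨ν₀, hν₀⟩ := hm.exists
  obtain ⟨i, j, hij⟩ := exists_plucker_ne_zero _ _ (hindep ν₀)
  obtain ⟨c, hc, hW⟩ := exists_pos_mul_norm_le_infDist ℓ.closed_of_finiteDimensional
    (disjoint_iff.2 ((inf_comm _ _).trans (havoid ν₀)))
  obtain ⟨ν, hν, hνdist⟩ := (hm.and_eventually (hdist.eventually_lt_const hc)).exists
  have hνW := intEmb_mem_span_of_plucker_eq _ _ hij (hν.trans hν₀.symm)
  nlinarith [hW _ hνW, one_le_norm_intEmb (hz ν)]

/-- if nonzero integer points `z_ν` approach a line `ℓ` through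
the origin avoiding the planes `span(z_ν, z_{ν+1})`, with `z_ν, z_{ν+1}`
linearly independent, then the covolumes `Δ_ν` of the lattices
`ℤz_ν + ℤz_{ν+1}` tend to infinity. -/
theorem covol_tendsto_atTop {d : ℕ}
    (z : ℕ → (Fin d → ℤ)) (hz : ∀ ν, z ν ≠ 0)
    (ℓ : Submodule ℝ (EuclideanSpace ℝ (Fin d)))
    (hℓ : Module.finrank ℝ ↥ℓ = 1)
    (hindep : ∀ ν, LinearIndependent ℝ ![intEmb (z ν), intEmb (z (ν + 1))])
    (havoid : ∀ ν, ℓ ⊓ Submodule.span ℝ {intEmb (z ν), intEmb (z (ν + 1))} = ⊥)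
    (hdist : Tendsto (fun ν => Metric.infDist (intEmb (z ν)) (ℓ : Set (EuclideanSpace ℝ (Fin d))))
      atTop (nhds 0)) :
    Tendsto (fun ν => covol2 (z ν) (z (ν + 1))) atTop atTop :=
  covol_tendsto_atTop_general z hz ℓ hindep havoid hdist
end

section
/- In the setting of Lemma 3, the measure of 𝔚_ν satisfies μ_N(𝔚_ν) ≤ C_{m,n} · ξ_ν^n · x_{ν+1}^m, where 𝔚_ν is the union over integer vectors (x, y) ∈ ℤ^m × ℤ^n with 0 ≠ |x̲| ≤ |x| ≤ x_{ν+1} and max_j |y_j − x₁θ_j^*| ≤ m|x̲| of the product sets Ω_{1,ν}(x, y₁) × ... × Ω_{n,ν}(x, y_n) ⊆ [0,1]^{(m−1)n}. -/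
open MeasureTheory Set
open scoped ENNReal

lemma slab_vol (k : ℕ) (a : Fin (k+1) → ℝ) (i0 : Fin (k+1)) (ha : a i0 ≠ 0)
    (c ξ : ℝ) :
    volume {v : Fin (k+1) → ℝ | (∀ i, v i ∈ Icc (0:ℝ) 1) ∧ |∑ i, v i * a i + c| ≤ ξ}
      ≤ ENNReal.ofReal (2 * ξ / |a i0|) := by
  set e := MeasurableEquiv.piFinSuccAbove (fun _ : Fin (k+1) => ℝ) i0
  set T : Set (ℝ × (Fin k → ℝ)) :=
    {p | (∀ i, p.2 i ∈ Icc (0:ℝ) 1) ∧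
      |p.1 * a i0 + (∑ i, p.2 i * a (i0.succAbove i) + c)| ≤ ξ} with hT
  have hTm : MeasurableSet T := by
    have h1 : MeasurableSet {p : ℝ × (Fin k → ℝ) | ∀ i, p.2 i ∈ Icc (0:ℝ) 1} := by
      rw [show {p : ℝ × (Fin k → ℝ) | ∀ i, p.2 i ∈ Icc (0:ℝ) 1}
          = ⋂ i, {p : ℝ × (Fin k → ℝ) | p.2 i ∈ Icc (0:ℝ) 1} by ext p; simp]
      exact MeasurableSet.iInter fun i =>
        (measurableSet_Icc).preimage (measurable_snd.eval)
    have h2 : MeasurableSet {p : ℝ × (Fin k → ℝ) |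
        |p.1 * a i0 + (∑ i, p.2 i * a (i0.succAbove i) + c)| ≤ ξ} := by
      have hf : Measurable fun p : ℝ × (Fin k → ℝ) =>
          p.1 * a i0 + (∑ i, p.2 i * a (i0.succAbove i) + c) := by
        apply Measurable.add
        · exact measurable_fst.mul measurable_const
        · exact (Finset.measurable_sum _ fun i _ =>
            ((measurable_pi_apply i).comp measurable_snd).mul measurable_const).add
            measurable_const
      have := (measurableSet_Icc (a := -ξ) (b := ξ)).preimage hf
      convert this using 1
      ext p; simp [abs_le]
    exact h1.inter h2
  have hsub : {v : Fin (k+1) → ℝ | (∀ i, v i ∈ Icc (0:ℝ) 1) ∧ |∑ i, v i * a i + c| ≤ ξ}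
      ⊆ e ⁻¹' T := by
    intro v hv
    have hsum : ∑ i, v i * a i = v i0 * a i0 + ∑ i, v (i0.succAbove i) * a (i0.succAbove i) :=
      Fin.sum_univ_succAbove (fun i => v i * a i) i0
    refine ⟨fun i => hv.1 _, ?_⟩
    show |(e v).1 * a i0 + (∑ i, (e v).2 i * a (i0.succAbove i) + c)| ≤ ξ
    have he1 : (e v).1 = v i0 := rfl
    have he2 : ∀ i, (e v).2 i = v (i0.succAbove i) := fun i => rfl
    simp only [he1, he2]
    calc |v i0 * a i0 + (∑ i, v (i0.succAbove i) * a (i0.succAbove i) + c)|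
        = |∑ i, v i * a i + c| := by rw [hsum]; ring_nf
      _ ≤ ξ := hv.2
  have hpres := volume_preserving_piFinSuccAbove (fun _ : Fin (k+1) => ℝ) i0
  have hA : (0:ℝ) < |a i0| := abs_pos.2 ha
  calc volume {v : Fin (k+1) → ℝ | (∀ i, v i ∈ Icc (0:ℝ) 1) ∧ |∑ i, v i * a i + c| ≤ ξ}
      ≤ volume (e ⁻¹' T) := measure_mono hsub
    _ = volume T := hpres.measure_preimage hTm.nullMeasurableSet
    _ ≤ ENNReal.ofReal (2 * ξ / |a i0|) := ?_
  rw [show (volume : Measure (ℝ × (Fin k → ℝ))) = (volume : Measure ℝ).prod volume from rfl,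
    Measure.prod_apply_symm hTm]
  calc ∫⁻ w, volume ((fun t => (t, w)) ⁻¹' T) ∂volume
      ≤ ∫⁻ w, (univ.pi fun _ : Fin k => Icc (0:ℝ) 1).indicator
          (fun _ => ENNReal.ofReal (2 * ξ / |a i0|)) w ∂volume := by
        refine lintegral_mono fun w => ?_
        by_cases hw : ∀ i, w i ∈ Icc (0:ℝ) 1
        · have hwi : w ∈ univ.pi fun _ : Fin k => Icc (0:ℝ) 1 := fun i _ => hw i
          rw [Set.indicator_of_mem hwi]
          have : ((fun t => (t, w)) ⁻¹' T) ⊆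
              Metric.closedBall (-((∑ i, w i * a (i0.succAbove i) + c) / a i0)) (ξ / |a i0|) := by
            intro t ht
            have h := ht.2
            simp only [Metric.mem_closedBall, Real.dist_eq]
            have : |t + (∑ i, w i * a (i0.succAbove i) + c) / a i0|
                = |t * a i0 + (∑ i, w i * a (i0.succAbove i) + c)| / |a i0| := by
              rw [← abs_div]
              congr 1
              field_simp
            rw [show t - -((∑ i, w i * a (i0.succAbove i) + c) / a i0)
                = t + (∑ i, w i * a (i0.succAbove i) + c) / a i0 by ring, this]
            gcongr
          calc volume ((fun t => (t, w)) ⁻¹' T) ≤ volume (Metric.closedBall _ (ξ / |a i0|)) :=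
              measure_mono this
            _ = ENNReal.ofReal (2 * ξ / |a i0|) := by
              rw [Real.volume_closedBall]; congr 1; ring
        · have : ((fun t => (t, w)) ⁻¹' T) = ∅ := by
            ext t; simp only [mem_preimage, mem_empty_iff_false, iff_false]
            intro ht; exact hw ht.1
          rw [this]
          simp
    _ = ENNReal.ofReal (2 * ξ / |a i0|) * volume (univ.pi fun _ : Fin k => Icc (0:ℝ) 1) := by
        rw [lintegral_indicator_const (MeasurableSet.univ_pi fun _ => measurableSet_Icc)]
    _ ≤ ENNReal.ofReal (2 * ξ / |a i0|) := by
        rw [volume_pi_pi]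
        simp [Real.volume_Icc]

lemma coord_vol (k : ℕ) (a : Fin (k+1) → ℤ) (i0 : Fin (k+1)) (ha : a i0 ≠ 0)
    (c L ξ : ℝ) (hL : 0 ≤ L) :
    volume {v : Fin (k+1) → ℝ | (∀ i, v i ∈ Icc (0:ℝ) 1) ∧
        ∃ y : ℤ, |(y:ℝ) - c| ≤ L ∧ |∑ i, v i * (a i : ℝ) + (c - y)| ≤ ξ}
      ≤ ENNReal.ofReal ((2 * L + 1) * (2 * ξ / |(a i0 : ℝ)|)) := by
  set Y : Finset ℤ := Finset.Icc ⌈c - L⌉ ⌊c + L⌋ with hY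
  have hsub : {v : Fin (k+1) → ℝ | (∀ i, v i ∈ Icc (0:ℝ) 1) ∧
        ∃ y : ℤ, |(y:ℝ) - c| ≤ L ∧ |∑ i, v i * (a i : ℝ) + (c - y)| ≤ ξ}
      ⊆ ⋃ y ∈ Y, {v : Fin (k+1) → ℝ | (∀ i, v i ∈ Icc (0:ℝ) 1) ∧
        |∑ i, v i * (a i : ℝ) + (c - y)| ≤ ξ} := by
    rintro v ⟨h1, y, hy1, hy2⟩
    refine mem_iUnion₂.2 ⟨y, ?_, h1, hy2⟩
    rw [hY, Finset.mem_Icc]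
    rw [abs_le] at hy1
    constructor
    · exact Int.ceil_le.2 (by linarith [hy1.1])
    · exact Int.le_floor.2 (by linarith [hy1.2])
  have haR : ((a i0 : ℝ)) ≠ 0 := Int.cast_ne_zero.2 ha
  calc volume _ ≤ ∑ y ∈ Y, volume {v : Fin (k+1) → ℝ | (∀ i, v i ∈ Icc (0:ℝ) 1) ∧
        |∑ i, v i * (a i : ℝ) + (c - y)| ≤ ξ} :=
      (measure_mono hsub).trans (measure_biUnion_finset_le Y _)
    _ ≤ ∑ y ∈ Y, ENNReal.ofReal (2 * ξ / |(a i0 : ℝ)|) :=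
      Finset.sum_le_sum fun y _ => slab_vol k (fun i => (a i : ℝ)) i0 haR (c - y) ξ
    _ = (Y.card : ℝ≥0∞) * ENNReal.ofReal (2 * ξ / |(a i0 : ℝ)|) := by
      rw [Finset.sum_const, nsmul_eq_mul]
    _ ≤ ENNReal.ofReal (2 * L + 1) * ENNReal.ofReal (2 * ξ / |(a i0 : ℝ)|) := by
      refine mul_le_mul_left ?_ _
      rw [← ENNReal.ofReal_natCast]
      refine ENNReal.ofReal_le_ofReal ?_
      have : (Y.card : ℝ) ≤ 2 * L + 1 := by
        rw [hY, Int.card_Icc]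
        rcases le_or_gt (⌊c + L⌋ + 1 - ⌈c - L⌉) 0 with h | h
        · rw [Int.toNat_of_nonpos h]; simp; linarith
        · have h2 : ((⌊c + L⌋ + 1 - ⌈c - L⌉).toNat : ℝ) = ((⌊c + L⌋ : ℝ) + 1 - ⌈c - L⌉) := by
            have := Int.toNat_of_nonneg h.le
            have h3 : (((⌊c + L⌋ + 1 - ⌈c - L⌉).toNat : ℤ) : ℝ) = ((⌊c + L⌋ + 1 - ⌈c - L⌉ : ℤ) : ℝ) := by
              exact_mod_cast congrArg (fun z : ℤ => (z : ℝ)) this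
            push_cast at h3 ⊢
            linarith
          rw [h2]
          have := Int.floor_le (c + L)
          have := Int.le_ceil (c - L)
          linarith
      exact this
    _ = ENNReal.ofReal ((2 * L + 1) * (2 * ξ / |(a i0 : ℝ)|)) := by
      rw [ENNReal.ofReal_mul (by positivity)]

/-- the measure of the union `𝔚_ν` of the product sets
`Ω_{1,ν}(x,y₁) × ⋯ × Ω_{n,ν}(x,y_n) ⊆ [0,1]^{(m−1)n}` over admissible integer
vectors `(x, y)` is at most `C_{m,n}·ξ_ν^n·x_{ν+1}^m`.  Here `m = k + 1`,
`x = (x₁, x̲)` with `x̲ ∈ ℤ^k`, `x̲ ≠ 0`, `|x| ≤ X = x_{ν+1}`, and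
`|y_j − x₁θ_j^*| ≤ m·|x̲|`. -/
theorem W_measure_bound (n k : ℕ) (hk : 1 ≤ k) (hn : 1 ≤ n) :
    ∃ C : ℝ, 0 < C ∧
      ∀ (θ : Fin n → ℝ) (ξ X : ℝ), 0 < ξ → 1 ≤ X →
        volume {Θ : Fin n → Fin k → ℝ |
            (∀ j i, Θ j i ∈ Set.Icc (0 : ℝ) 1) ∧
            ∃ (x₁ : ℤ) (xu : Fin k → ℤ) (y : Fin n → ℤ),
              xu ≠ 0 ∧
              (|x₁| : ℝ) ≤ X ∧
              ‖(fun i => (xu i : ℝ) : Fin k → ℝ)‖ ≤ X ∧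
              (∀ j, |(y j : ℝ) - (x₁ : ℝ) * θ j| ≤
                ((k : ℝ) + 1) * ‖(fun i => (xu i : ℝ) : Fin k → ℝ)‖) ∧
              (∀ j, |∑ i, Θ j i * (xu i : ℝ) + (θ j * (x₁ : ℝ) - (y j : ℝ))| ≤ ξ)} ≤
          ENNReal.ofReal (C * ξ ^ n * X ^ (k + 1)) := by
  obtain ⟨k, rfl⟩ : ∃ k', k = k' + 1 := ⟨k - 1, by omega⟩
  set c0 : ℝ := ((k + 1 : ℕ) : ℝ) + 1 with hc0
  have hc0pos : 0 < c0 := by rw [hc0]; positivity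
  set D0 : ℝ := 2 * (2 * c0 + 1) with hD0
  refine ⟨5 ^ (k + 2) * D0 ^ n, by positivity, ?_⟩
  intro θ ξ X hξ hX
  set B : ℤ := ⌈X⌉ with hB
  have hBX : (B : ℝ) ≤ X + 1 := (Int.ceil_lt_add_one X).le
  have hXB : X ≤ (B : ℝ) := Int.le_ceil X
  set F : Finset (ℤ × (Fin (k+1) → ℤ)) :=
    (Finset.Icc (-B) B ×ˢ Fintype.piFinset fun _ => Finset.Icc (-B) B).filter
      (fun p => p.2 ≠ 0) with hF
  set Sj : (ℤ × (Fin (k+1) → ℤ)) → Fin n → Set (Fin (k+1) → ℝ) := fun p j =>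
    {v | (∀ i, v i ∈ Icc (0:ℝ) 1) ∧
      ∃ y : ℤ, |(y:ℝ) - θ j * (p.1 : ℝ)| ≤
          c0 * ‖(fun i => (p.2 i : ℝ) : Fin (k+1) → ℝ)‖ ∧
        |∑ i, v i * (p.2 i : ℝ) + (θ j * (p.1 : ℝ) - y)| ≤ ξ} with hSj
  have hsub : {Θ : Fin n → Fin (k+1) → ℝ |
            (∀ j i, Θ j i ∈ Set.Icc (0 : ℝ) 1) ∧
            ∃ (x₁ : ℤ) (xu : Fin (k+1) → ℤ) (y : Fin n → ℤ),
              xu ≠ 0 ∧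
              (|x₁| : ℝ) ≤ X ∧
              ‖(fun i => (xu i : ℝ) : Fin (k+1) → ℝ)‖ ≤ X ∧
              (∀ j, |(y j : ℝ) - (x₁ : ℝ) * θ j| ≤
                (((k+1 : ℕ) : ℝ) + 1) * ‖(fun i => (xu i : ℝ) : Fin (k+1) → ℝ)‖) ∧
              (∀ j, |∑ i, Θ j i * (xu i : ℝ) + (θ j * (x₁ : ℝ) - (y j : ℝ))| ≤ ξ)}
      ⊆ ⋃ p ∈ F, univ.pi (fun j => Sj p j) := by
    rintro Θ ⟨hcube, x₁, xu, y, hxu0, hx1, hxu, hy, hΘ⟩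
    refine mem_iUnion₂.2 ⟨(x₁, xu), ?_, ?_⟩
    · rw [hF, Finset.mem_filter]
      refine ⟨Finset.mem_product.2 ⟨?_, ?_⟩, hxu0⟩
      · rw [Finset.mem_Icc]
        have : |(x₁ : ℝ)| ≤ (B : ℝ) := hx1.trans hXB
        rw [abs_le] at this
        constructor <;> [exact_mod_cast this.1; exact_mod_cast this.2]
      · refine Fintype.mem_piFinset.2 fun i => ?_
        rw [Finset.mem_Icc]
        have h1 : |(xu i : ℝ)| ≤ ‖(fun i => (xu i : ℝ) : Fin (k+1) → ℝ)‖ := by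
          simpa [Real.norm_eq_abs] using
            norm_le_pi_norm (fun i => (xu i : ℝ) : Fin (k+1) → ℝ) i
        have : |(xu i : ℝ)| ≤ (B : ℝ) := h1.trans (hxu.trans hXB)
        rw [abs_le] at this
        constructor <;> [exact_mod_cast this.1; exact_mod_cast this.2]
    · intro j _
      refine ⟨fun i => hcube j i, y j, ?_, hΘ j⟩
      rw [mul_comm (θ j)]
      exact hy j
  have hvolSj : ∀ p ∈ F, ∀ j, volume (Sj p j) ≤ ENNReal.ofReal (D0 * ξ) := by
    intro p hp j
    have hpxu : p.2 ≠ 0 := (Finset.mem_filter.1 hp).2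
    obtain ⟨i0, -, hi0⟩ := Finset.exists_max_image Finset.univ (fun i => |p.2 i|)
      ⟨0, Finset.mem_univ 0⟩
    have hne : p.2 i0 ≠ 0 := by
      obtain ⟨i, hi⟩ := Function.ne_iff.1 hpxu
      intro h0
      have h2 := hi0 i (Finset.mem_univ i)
      rw [h0, abs_zero] at h2
      exact hi (abs_eq_zero.1 (le_antisymm h2 (abs_nonneg _)))
    have hA1 : (1:ℝ) ≤ |(p.2 i0 : ℝ)| := by
      rw [← Int.cast_abs]
      exact_mod_cast Int.one_le_abs hne
    set A : ℝ := |(p.2 i0 : ℝ)| with hA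
    have hnorm : ‖(fun i => (p.2 i : ℝ) : Fin (k+1) → ℝ)‖ = A := by
      refine le_antisymm ?_ ?_
      · refine (pi_norm_le_iff_of_nonneg (by positivity)).2 fun i => ?_
        rw [Real.norm_eq_abs, ← Int.cast_abs, hA, ← Int.cast_abs]
        exact_mod_cast hi0 i (Finset.mem_univ i)
      · simpa [Real.norm_eq_abs] using
          norm_le_pi_norm (fun i => (p.2 i : ℝ) : Fin (k+1) → ℝ) i0
    have h := coord_vol k p.2 i0 hne (θ j * (p.1 : ℝ)) (c0 * A) ξ
      (by positivity)
    rw [hSj]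
    simp only [hnorm]
    refine h.trans (ENNReal.ofReal_le_ofReal ?_)
    have e1 : (2 * (c0 * A) + 1) * (2 * ξ / A) = 2 * c0 * (2 * ξ) + 2 * ξ / A := by
      field_simp
    have h1 : 2 * ξ / A ≤ 2 * ξ := div_le_self (by positivity) hA1
    rw [e1, hD0]
    nlinarith
  have hcard : ((F.card : ℝ)) ≤ (5 * X) ^ (k + 2) := by
    have h1 : F.card ≤ (2 * B + 1).toNat ^ (k + 2) := by
      calc F.card ≤ ((Finset.Icc (-B) B ×ˢ Fintype.piFinset
            fun _ : Fin (k+1) => Finset.Icc (-B) B)).card := Finset.card_filter_le _ _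
        _ = (Finset.Icc (-B) B).card * ∏ _i : Fin (k+1), (Finset.Icc (-B) B).card := by
            rw [Finset.card_product, Fintype.card_piFinset]
        _ = (2 * B + 1).toNat ^ (k + 2) := by
            rw [Int.card_Icc, Finset.prod_const]
            simp only [Finset.card_univ, Fintype.card_fin]
            rw [show B + 1 - -B = 2 * B + 1 by ring]
            ring
    have hB1 : (1:ℤ) ≤ B := by exact_mod_cast (by linarith : (1:ℝ) ≤ (B:ℝ))
    have h2 : (((2 * B + 1).toNat : ℝ)) ≤ 5 * X := by
      have h3 : (((2 * B + 1).toNat : ℝ)) = (((2 * B + 1) : ℤ) : ℝ) := by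
        exact_mod_cast congrArg (fun z : ℤ => (z : ℝ))
          (Int.toNat_of_nonneg (by omega : (0:ℤ) ≤ 2 * B + 1))
      rw [h3]
      push_cast
      linarith
    calc ((F.card : ℝ)) ≤ (((2 * B + 1).toNat : ℝ)) ^ (k + 2) := by
          exact_mod_cast h1
      _ ≤ (5 * X) ^ (k + 2) := pow_le_pow_left₀ (by positivity) h2 _
  calc volume _ ≤ volume (⋃ p ∈ F, univ.pi (fun j => Sj p j)) := measure_mono hsub
    _ ≤ ∑ p ∈ F, volume (univ.pi (fun j => Sj p j)) := measure_biUnion_finset_le F _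
    _ ≤ ∑ p ∈ F, ENNReal.ofReal ((D0 * ξ) ^ n) := by
        refine Finset.sum_le_sum fun p hp => ?_
        rw [volume_pi_pi]
        calc ∏ j, volume (Sj p j) ≤ ∏ _j : Fin n, ENNReal.ofReal (D0 * ξ) :=
            Finset.prod_le_prod' fun j _ => hvolSj p hp j
          _ = ENNReal.ofReal ((D0 * ξ) ^ n) := by
            rw [Finset.prod_const, Finset.card_univ, Fintype.card_fin,
              ← ENNReal.ofReal_pow (by positivity)]
    _ = (F.card : ℝ≥0∞) * ENNReal.ofReal ((D0 * ξ) ^ n) := by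
        rw [Finset.sum_const, nsmul_eq_mul]
    _ ≤ ENNReal.ofReal (5 ^ (k + 2) * D0 ^ n * ξ ^ n * X ^ (k + 2)) := by
        rw [← ENNReal.ofReal_natCast, ← ENNReal.ofReal_mul (Nat.cast_nonneg _)]
        refine ENNReal.ofReal_le_ofReal ?_
        have : (F.card : ℝ) * (D0 * ξ) ^ n ≤ (5 * X) ^ (k + 2) * ((D0 * ξ) ^ n) := by
          refine mul_le_mul_of_nonneg_right hcard (by positivity)
        calc (F.card : ℝ) * (D0 * ξ) ^ n ≤ (5 * X) ^ (k + 2) * ((D0 * ξ) ^ n) := this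
          _ = 5 ^ (k + 2) * D0 ^ n * ξ ^ n * X ^ (k + 2) := by rw [mul_pow, mul_pow]; ring
    _ = ENNReal.ofReal (5 ^ (k + 2) * D0 ^ n * ξ ^ n * X ^ (k + 1 + 1)) := rfl
end
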